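/- arXiv:2508.18115 — 11 statements merged into one kernel-verified Lean document; each statement's English description precedes it below -/
import Mathlib

section
/- (Lemma 1, (⊛/*)-distribution.) For all assertions A, B, C, D and p-heaps a, b, c, d, the assertion (⌈a⌉A ⊛ ⌈b⌉B) ⋆ (⌈c⌉C ⊛ ⌈d⌉D) entails (⌈a⌉A ⋆ ⌈c⌉C) ⊛ (⌈b⌉B ⋆ ⌈d⌉D); moreover, every p-heap h satisfying (⌈a⌉A ⊛ ⌈b⌉B) ⋆ (⌈c⌉C ⊛ ⌈d⌉D) is such that the weak compositions a ∘̄ b and c ∘̄ d are defined and have disjoint domains. -/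
/-- Boyland fractional permissions: rationals in (0, 1]. -/
abbrev Perm : Type := {q : ℚ // 0 < q ∧ q ≤ 1}

/-- A p-heap: partial map from locations to value-permission pairs. -/
abbrev PHeap (Loc Val : Type) : Type := Loc → Option (Val × Perm)

/-- Domain of a p-heap. -/
def pdom {Loc Val : Type} (h : PHeap Loc Val) : Set Loc := {l | h l ≠ none}

/-- Two p-heaps are disjoint if their domains do not intersect. -/
def pdisjoint {Loc Val : Type} (h₁ h₂ : PHeap Loc Val) : Prop :=
  pdom h₁ ∩ pdom h₂ = ∅

/-- Two p-heaps are compatible if they agree on values on the overlap and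
the permissions add up to at most 1. -/
def pcompatible {Loc Val : Type} (h₁ h₂ : PHeap Loc Val) : Prop :=
  ∀ l v₁ π₁ v₂ π₂, h₁ l = some (v₁, π₁) → h₂ l = some (v₂, π₂) →
    v₁ = v₂ ∧ π₁.1 + π₂.1 ≤ 1

/-- Strong composition: union of disjoint heaps (meaningful when disjoint). -/
def sComp {Loc Val : Type} (h₁ h₂ : PHeap Loc Val) : PHeap Loc Val :=
  fun l => (h₁ l).orElse (fun _ => h₂ l)

/-- Weak composition: adds permissions on the overlap (meaningful when compatible). -/
def wComp {Loc Val : Type} (h₁ h₂ : PHeap Loc Val) : PHeap Loc Val :=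
  fun l =>
    match h₁ l, h₂ l with
    | some (v, π₁), some (_, π₂) =>
        if h : π₁.1 + π₂.1 ≤ 1 then
          some (v, ⟨π₁.1 + π₂.1, add_pos π₁.2.1 π₂.2.1, h⟩)
        else none
    | some p, none => some p
    | none, some p => some p
    | none, none => none

/-- Scalar multiplication of a p-heap by a permission. -/
def psmul {Loc Val : Type} (π : Perm) (h : PHeap Loc Val) : PHeap Loc Val :=
  fun l => (h l).map fun vp =>
    (vp.1, ⟨π.1 * vp.2.1, mul_pos π.2.1 vp.2.2.1,
      by nlinarith [π.2.1, π.2.2, vp.2.2.1, vp.2.2.2]⟩)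

/-- Entailment between assertions. -/
def entails {Loc Val : Type} (P Q : PHeap Loc Val → Prop) : Prop :=
  ∀ h, P h → Q h

/-- Strong separating conjunction. -/
def star {Loc Val : Type} (P Q : PHeap Loc Val → Prop) : PHeap Loc Val → Prop :=
  fun h => ∃ h₁ h₂, pdisjoint h₁ h₂ ∧ P h₁ ∧ Q h₂ ∧ h = sComp h₁ h₂

/-- Weak separating conjunction. -/
def wstar {Loc Val : Type} (P Q : PHeap Loc Val → Prop) : PHeap Loc Val → Prop :=
  fun h => ∃ h₁ h₂, pcompatible h₁ h₂ ∧ P h₁ ∧ Q h₂ ∧ h = wComp h₁ h₂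

/-- Labeled assertion ⌈a⌉P : the heap is exactly `a` and `P` holds of it. -/
def lbl {Loc Val : Type} (a : PHeap Loc Val) (P : PHeap Loc Val → Prop) :
    PHeap Loc Val → Prop :=
  fun h => h = a ∧ P a

/-- Permission-scaled assertion P^π. -/
def ppow {Loc Val : Type} (P : PHeap Loc Val → Prop) (π : Perm) :
    PHeap Loc Val → Prop :=
  fun h => ∃ h', P h' ∧ h = psmul π h'


lemma wComp_ne_none {Loc Val : Type} {h₁ h₂ : PHeap Loc Val} (hc : pcompatible h₁ h₂)
    (l : Loc) (hne : h₁ l ≠ none ∨ h₂ l ≠ none) : wComp h₁ h₂ l ≠ none := by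
  intro h0
  unfold wComp at h0
  rcases e₁ : h₁ l with _ | ⟨v₁, π₁⟩ <;> rcases e₂ : h₂ l with _ | ⟨v₂, π₂⟩ <;>
      rw [e₁, e₂] at h0 <;> simp at h0
  · exact hne.elim (fun h => h e₁) (fun h => h e₂)
  · exact absurd (hc l v₁ π₁ v₂ π₂ e₁ e₂).2 h0.not_ge

theorem swdist_distribution {Loc Val : Type}
    (A B C D : PHeap Loc Val → Prop) (a b c d : PHeap Loc Val) :
    entails (star (wstar (lbl a A) (lbl b B)) (wstar (lbl c C) (lbl d D)))
      (wstar (star (lbl a A) (lbl c C)) (star (lbl b B) (lbl d D))) ∧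
    (∀ h : PHeap Loc Val,
      star (wstar (lbl a A) (lbl b B)) (wstar (lbl c C) (lbl d D)) h →
        pcompatible a b ∧ pcompatible c d ∧ pdisjoint (wComp a b) (wComp c d)) := by
  -- common extraction
  have main : ∀ h : PHeap Loc Val,
      star (wstar (lbl a A) (lbl b B)) (wstar (lbl c C) (lbl d D)) h →
      (pcompatible a b ∧ pcompatible c d ∧ pdisjoint (wComp a b) (wComp c d)) ∧
      wstar (star (lbl a A) (lbl c C)) (star (lbl b B) (lbl d D)) h := by
    rintro h ⟨h₁, h₂, hdisj, ⟨a', b', hab, ⟨ea, hA⟩, ⟨eb, hB⟩, rfl⟩,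
      ⟨c', d', hcd, ⟨ec, hC⟩, ⟨ed, hD⟩, rfl⟩, rfl⟩
    rw [ea, eb] at hab hdisj ⊢; rw [ec, ed] at hcd hdisj ⊢; clear ea eb ec ed
    refine ⟨⟨hab, hcd, hdisj⟩, ?_⟩
    -- disjointness facts
    have hdisj' : ∀ l, wComp a b l ≠ none → wComp c d l = none := by
      intro l hl
      by_contra hcd'
      have : l ∈ pdom (wComp a b) ∩ pdom (wComp c d) := ⟨hl, hcd'⟩
      rw [hdisj] at this; exact this
    have hkey : ∀ l, (a l ≠ none ∨ b l ≠ none) → c l = none ∧ d l = none := by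
      intro l hl
      have h2 := hdisj' l (wComp_ne_none hab l hl)
      constructor
      · by_contra hc'
        exact wComp_ne_none hcd l (Or.inl hc') h2
      · by_contra hd'
        exact wComp_ne_none hcd l (Or.inr hd') h2
    refine ⟨sComp a c, sComp b d, ?_, ⟨a, c, ?_, ⟨rfl, hA⟩, ⟨rfl, hC⟩, rfl⟩,
      ⟨b, d, ?_, ⟨rfl, hB⟩, ⟨rfl, hD⟩, rfl⟩, ?_⟩
    · -- pcompatible (sComp a c) (sComp b d)
      intro l v₁ π₁ v₂ π₂ e₁ e₂
      unfold sComp at e₁ e₂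
      rcases ea : a l with _ | pa <;> rcases eb : b l with _ | pb <;>
        rw [ea] at e₁ <;> rw [eb] at e₂ <;> simp at e₁ e₂
      · -- a none, b none : e₁ : c l = some, e₂ : d l = some
        exact hcd l v₁ π₁ v₂ π₂ e₁ e₂
      · -- a none, b some : c l = some, contradiction with hkey
        have := (hkey l (Or.inr (by rw [eb]; simp))).1
        rw [this] at e₁; exact absurd e₁ (by simp)
      · -- a some, b none : d l = some, contradiction
        have := (hkey l (Or.inl (by rw [ea]; simp))).2
        rw [this] at e₂; exact absurd e₂ (by simp)
      · -- a some, b some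
        exact hab l v₁ π₁ v₂ π₂ (by rw [ea, e₁]) (by rw [eb, e₂])
    · -- pdisjoint a c
      ext l
      simp only [Set.mem_inter_iff, Set.mem_empty_iff_false, iff_false, not_and]
      intro hal
      have := (hkey l (Or.inl hal)).1
      simp [pdom, this]
    · -- pdisjoint b d
      ext l
      simp only [Set.mem_inter_iff, Set.mem_empty_iff_false, iff_false, not_and]
      intro hbl
      have := (hkey l (Or.inr hbl)).2
      simp [pdom, this]
    · -- heap equality
      funext l
      rcases ea : a l with _ | pa <;> rcases eb : b l with _ | pb
      · simp [sComp, wComp, ea, eb]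
      · have hc0 := (hkey l (Or.inr (by rw [eb]; simp))).1
        have hd0 := (hkey l (Or.inr (by rw [eb]; simp))).2
        simp [sComp, wComp, ea, eb, hc0, hd0]
      · have hc0 := (hkey l (Or.inl (by rw [ea]; simp))).1
        have hd0 := (hkey l (Or.inl (by rw [ea]; simp))).2
        simp [sComp, wComp, ea, eb, hc0, hd0]
      · have hc0 := (hkey l (Or.inl (by rw [ea]; simp))).1
        have hd0 := (hkey l (Or.inl (by rw [ea]; simp))).2
        obtain ⟨va, πa⟩ := pa; obtain ⟨vb, πb⟩ := pb
        have hle := (hab l va πa vb πb ea eb).2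
        simp [sComp, wComp, ea, eb, hc0, hd0, hle]
  exact ⟨fun h hh => (main h hh).2, fun h hh => (main h hh).1⟩
end

section
/- (Lemma 1, (*/⊛)-distribution.) For all assertions A, B, C, D and p-heaps a, b, c, d such that the weak compositions a ∘̄ b and c ∘̄ d are defined and have disjoint domains, the assertion (⌈a⌉A ⋆ ⌈c⌉C) ⊛ (⌈b⌉B ⋆ ⌈d⌉D) entails (⌈a⌉A ⊛ ⌈b⌉B) ⋆ (⌈c⌉C ⊛ ⌈d⌉D). -/
lemma pdisj_cases {Loc Val : Type} {h₁ h₂ : PHeap Loc Val} (hd : pdisjoint h₁ h₂)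
    (l : Loc) : h₁ l = none ∨ h₂ l = none := by
  by_contra hc
  push_neg at hc
  exact Set.eq_empty_iff_forall_notMem.1 hd l ⟨hc.1, hc.2⟩

theorem wsdist_distribution {Loc Val : Type}
    (A B C D : PHeap Loc Val → Prop) (a b c d : PHeap Loc Val)
    (hab : pcompatible a b) (hcd : pcompatible c d)
    (hdisj : pdisjoint (wComp a b) (wComp c d)) :
    entails (wstar (star (lbl a A) (lbl c C)) (star (lbl b B) (lbl d D)))
      (star (wstar (lbl a A) (lbl b B)) (wstar (lbl c C) (lbl d D))) := by
  rintro h ⟨h₁, h₂, hcomp, ⟨a', c', hac, ⟨ea, hA⟩, ⟨ec, hC⟩, rfl⟩,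
    ⟨b', d', hbd, ⟨eb, hB⟩, ⟨ed, hD⟩, rfl⟩, rfl⟩
  subst ea ec eb ed
  refine ⟨wComp a' b', wComp c' d', hdisj, ⟨a', b', hab, ⟨rfl, hA⟩, ⟨rfl, hB⟩, rfl⟩,
    ⟨c', d', hcd, ⟨rfl, hC⟩, ⟨rfl, hD⟩, rfl⟩, ?_⟩
  funext l
  have h1 := pdisj_cases hac l
  have h2 := pdisj_cases hbd l
  have h3 := pdisj_cases hdisj l
  clear hcomp hac hbd hdisj hab hcd hA hB hC hD
  rcases ha : a' l with _ | ⟨va, pa⟩ <;> rcases hb : b' l with _ | ⟨vb, pb⟩ <;>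
    rcases hc : c' l with _ | ⟨vc, pc⟩ <;> rcases hd : d' l with _ | ⟨vd, pd⟩ <;>
    simp only [sComp, wComp, ha, hb, hc, hd] at h1 h2 h3 ⊢ <;> simp_all
end

section
/- (Weak-strong conversion, weak-to-strong direction.) For all assertions A, D and p-heaps a, d with disjoint domains, the assertion ⌈a⌉A ⊛ ⌈d⌉D entails ⌈a⌉A ⋆ ⌈d⌉D. -/
theorem weak_to_strong_conversion {Loc Val : Type}
    (A D : PHeap Loc Val → Prop) (a d : PHeap Loc Val)
    (hdisj : pdisjoint a d) :
    entails (wstar (lbl a A) (lbl d D)) (star (lbl a A) (lbl d D)) := by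
  rintro h ⟨h₁, h₂, _, ⟨rfl, hA⟩, ⟨rfl, hD⟩, rfl⟩
  refine ⟨h₁, h₂, hdisj, ⟨rfl, hA⟩, ⟨rfl, hD⟩, funext fun l => ?_⟩
  have hl : h₁ l = none ∨ h₂ l = none := by
    by_contra hcon
    push_neg at hcon
    have : l ∈ pdom h₁ ∩ pdom h₂ := ⟨hcon.1, hcon.2⟩
    rw [hdisj] at this
    exact this
  rcases hl with hl | hl <;> simp [wComp, sComp, hl] <;>
    rcases hal : h₁ l with _ | p <;> rcases hdl : h₂ l with _ | q <;>
      simp_all [wComp, sComp]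
end

section
/- (Lemma 2, ⊛ Split.) For every assertion A, every p-heap a, and all permissions π₁, π₂ with π₁ + π₂ ≤ 1 (so that π₁ ⊕ π₂ = π₁ + π₂ is defined), the assertion (⌈a⌉A)^{π₁+π₂} entails (⌈a⌉A)^{π₁} ⊛ (⌈a⌉A)^{π₂}. -/
theorem wstar_split {Loc Val : Type}
    (A : PHeap Loc Val → Prop) (a : PHeap Loc Val)
    (π₁ π₂ : Perm) (hsum : π₁.1 + π₂.1 ≤ 1) :
    entails (ppow (lbl a A) ⟨π₁.1 + π₂.1, add_pos π₁.2.1 π₂.2.1, hsum⟩)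
      (wstar (ppow (lbl a A) π₁) (ppow (lbl a A) π₂)) := by
  rintro h ⟨h', ⟨rfl, hA⟩, rfl⟩
  refine ⟨psmul π₁ h', psmul π₂ h', ?_, ⟨h', ⟨rfl, hA⟩, rfl⟩, ⟨h', ⟨rfl, hA⟩, rfl⟩, ?_⟩
  · intro l v₁ q₁ v₂ q₂ h1 h2
    simp only [psmul, Option.map_eq_some_iff] at h1 h2
    obtain ⟨⟨v, q⟩, hal, he1⟩ := h1
    obtain ⟨⟨v', q'⟩, hal', he2⟩ := h2
    rw [hal] at hal'
    cases hal'
    cases he1; cases he2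
    refine ⟨rfl, ?_⟩
    have := q.2.1; have := q.2.2
    have := π₁.2.1; have := π₂.2.1
    show π₁.1 * q.1 + π₂.1 * q.1 ≤ 1
    nlinarith
  · funext l
    simp only [psmul, wComp, Option.map]
    cases hal : h' l with
    | none => simp
    | some vp =>
      obtain ⟨v, q⟩ := vp
      have hle : π₁.1 * q.1 + π₂.1 * q.1 ≤ 1 := by
        have := q.2.1; have := q.2.2
        have := π₁.2.1; have := π₂.2.1
        nlinarith
      simp only [dif_pos hle]
      congr 1
      exact Prod.ext rfl (Subtype.ext (by ring))
end

section
/- (Lemma 2, ⊛ Join.) For every assertion A, every p-heap a, and all permissions π₁, π₂ with π₁ + π₂ ≤ 1 (so that π₁ ⊕ π₂ = π₁ + π₂ is defined), the assertion (⌈a⌉A)^{π₁} ⊛ (⌈a⌉A)^{π₂} entails (⌈a⌉A)^{π₁+π₂}. -/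
theorem wstar_join {Loc Val : Type}
    (A : PHeap Loc Val → Prop) (a : PHeap Loc Val)
    (π₁ π₂ : Perm) (hsum : π₁.1 + π₂.1 ≤ 1) :
    entails (wstar (ppow (lbl a A) π₁) (ppow (lbl a A) π₂))
      (ppow (lbl a A) ⟨π₁.1 + π₂.1, add_pos π₁.2.1 π₂.2.1, hsum⟩) := by
  rintro h ⟨h₁, h₂, _, ⟨a₁, ⟨ha₁, hA⟩, rfl⟩, ⟨a₂, ⟨ha₂, _⟩, rfl⟩, rfl⟩
  subst ha₁ ha₂
  refine ⟨a₂, ⟨rfl, hA⟩, ?_⟩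
  funext l
  simp only [wComp, psmul, Option.map]
  cases ha : a₂ l with
  | none => simp
  | some vp =>
    obtain ⟨v, π⟩ := vp
    have hle : π₁.1 * π.1 + π₂.1 * π.1 ≤ 1 := by
      nlinarith [π.2.1, π.2.2, π₁.2.1, π₂.2.1]
    simp only [dif_pos hle]
    congr 1
    exact Prod.ext rfl (Subtype.ext (add_mul π₁.1 π₂.1 π.1).symm)
end

section
/- (Principle (@^π).) For every assertion A, every p-heap a, and every permission π, the assertions (⌈a⌉A)^π and ⌈π·a⌉(A^π) are equivalent: each entails the other. -/
lemma psmul_inj {Loc Val : Type} (π : Perm) {h₁ h₂ : PHeap Loc Val}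
    (he : psmul π h₁ = psmul π h₂) : h₁ = h₂ := by
  funext l
  have := congrFun he l
  simp only [psmul] at this
  cases e1 : h₁ l with
  | none => cases e2 : h₂ l with
    | none => rfl
    | some p => rw [e1, e2] at this; simp at this
  | some p => cases e2 : h₂ l with
    | none => rw [e1, e2] at this; simp at this
    | some q =>
      rw [e1, e2] at this
      simp only [Option.map_some, Option.some.injEq, Prod.mk.injEq] at this
      obtain ⟨hv, hp⟩ := this
      have hπ := π.2.1
      have : p.2.1 = q.2.1 := by
        have := congrArg Subtype.val hp
        exact mul_left_cancel₀ (ne_of_gt hπ) this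
      have : p.2 = q.2 := Subtype.ext this
      simp [Prod.ext_iff, hv, this]

theorem label_perm_principle {Loc Val : Type}
    (A : PHeap Loc Val → Prop) (a : PHeap Loc Val) (π : Perm) :
    entails (ppow (lbl a A) π) (lbl (psmul π a) (ppow A π)) ∧
    entails (lbl (psmul π a) (ppow A π)) (ppow (lbl a A) π) := by
  constructor
  · rintro h ⟨h', ⟨rfl, hA⟩, rfl⟩
    exact ⟨rfl, h', hA, rfl⟩
  · rintro h ⟨rfl, h', hA, he⟩
    have : h' = a := psmul_inj π he.symm
    subst this
    exact ⟨h', ⟨rfl, hA⟩, rfl⟩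
end

section
/- (Auxiliary equivalence (a) in the proof of principle (*^π).) For all assertions A, B and every permission π, the assertions (A ⋆ B)^π and A^π ⋆ B^π are equivalent: each entails the other. -/
lemma pdom_psmul {Loc Val : Type} (π : Perm) (h : PHeap Loc Val) :
    pdom (psmul π h) = pdom h := by
  ext l
  simp [pdom, psmul, Option.map_eq_none_iff]

lemma psmul_sComp {Loc Val : Type} (π : Perm) (h₁ h₂ : PHeap Loc Val) :
    psmul π (sComp h₁ h₂) = sComp (psmul π h₁) (psmul π h₂) := by
  funext l
  simp only [psmul, sComp]
  cases h₁ l <;> cases h₂ l <;> simp [Option.orElse]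

theorem star_ppow_distrib {Loc Val : Type}
    (A B : PHeap Loc Val → Prop) (π : Perm) :
    entails (ppow (star A B) π) (star (ppow A π) (ppow B π)) ∧
    entails (star (ppow A π) (ppow B π)) (ppow (star A B) π) := by
  constructor
  · rintro h ⟨h', ⟨h₁, h₂, hd, hA, hB, rfl⟩, rfl⟩
    exact ⟨psmul π h₁, psmul π h₂,
      by rw [pdisjoint, pdom_psmul, pdom_psmul]; exact hd,
      ⟨h₁, hA, rfl⟩, ⟨h₂, hB, rfl⟩, psmul_sComp π h₁ h₂⟩
  · rintro h ⟨_, _, hd, ⟨h₁, hA, rfl⟩, ⟨h₂, hB, rfl⟩, rfl⟩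
    exact ⟨sComp h₁ h₂,
      ⟨h₁, h₂, by rwa [pdisjoint, pdom_psmul, pdom_psmul] at hd, hA, hB, rfl⟩,
      (psmul_sComp π h₁ h₂).symm⟩
end

section
/- (Auxiliary entailment (d) in the proof of principle (⊛^π).) For all assertions A, B and every permission π, the assertion (A ⊛ B)^π entails A^π ⊛ B^π. -/
theorem wstar_ppow_distrib {Loc Val : Type}
    (A B : PHeap Loc Val → Prop) (π : Perm) :
    entails (ppow (wstar A B) π) (wstar (ppow A π) (ppow B π)) := by
  rintro h ⟨h', ⟨h₁, h₂, hc, hA, hB, rfl⟩, rfl⟩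
  refine ⟨psmul π h₁, psmul π h₂, ?_, ⟨h₁, hA, rfl⟩, ⟨h₂, hB, rfl⟩, ?_⟩
  · intro l v₁ π₁ v₂ π₂ e₁ e₂
    simp only [psmul, Option.map_eq_some_iff] at e₁ e₂
    obtain ⟨⟨w₁, q₁⟩, m₁, e₁⟩ := e₁
    obtain ⟨⟨w₂, q₂⟩, m₂, e₂⟩ := e₂
    obtain ⟨rfl, hle⟩ := hc l w₁ q₁ w₂ q₂ m₁ m₂
    cases e₁; cases e₂
    refine ⟨rfl, ?_⟩
    simp only
    have := π.2.1; have := π.2.2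
    nlinarith
  · funext l
    simp only [psmul, wComp]
    rcases e₁ : h₁ l with _ | ⟨v₁, π₁⟩ <;> rcases e₂ : h₂ l with _ | ⟨v₂, π₂⟩ <;>
      simp [e₁, e₂]
    obtain ⟨rfl, hle⟩ := hc l v₁ π₁ v₂ π₂ e₁ e₂
    have hle' : π.1 * π₁.1 + π.1 * π₂.1 ≤ 1 := by
      have := π.2.1; have := π.2.2; nlinarith
    rw [dif_pos hle, dif_pos hle']
    simp [mul_add]
end

section
/- (Principle (⊛^π).) For all assertions A, B, all compatible p-heaps a, b, and every permission π, letting g = (π·a) ∘̄ (π·b) (which is defined since π·a and π·b are compatible), the assertion ⌈g⌉((⌈a⌉A ⊛ ⌈b⌉B)^π) entails ⌈π·a⌉(A^π) ⊛ ⌈π·b⌉(B^π). -/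
theorem wstar_pi_principle {Loc Val : Type}
    (A B : PHeap Loc Val → Prop) (a b : PHeap Loc Val)
    (hcomp : pcompatible a b) (π : Perm) :
    entails (lbl (wComp (psmul π a) (psmul π b)) (ppow (wstar (lbl a A) (lbl b B)) π))
      (wstar (lbl (psmul π a) (ppow A π)) (lbl (psmul π b) (ppow B π))) := by
  rintro h ⟨hg, h', ⟨h₁, h₂, _, ⟨_, hA⟩, ⟨_, hB⟩, _⟩, _⟩
  refine ⟨psmul π a, psmul π b, ?_, ⟨rfl, a, hA, rfl⟩, ⟨rfl, b, hB, rfl⟩, hg⟩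
  intro l v₁ ρ₁ v₂ ρ₂ e₁ e₂
  simp only [psmul, Option.map_eq_some_iff] at e₁ e₂
  obtain ⟨⟨w₁, p₁⟩, ha, he₁⟩ := e₁
  obtain ⟨⟨w₂, p₂⟩, hb, he₂⟩ := e₂
  obtain ⟨hv, hs⟩ := hcomp l w₁ p₁ w₂ p₂ ha hb
  cases he₁; cases he₂
  refine ⟨hv, ?_⟩
  simp only []
  nlinarith [π.2.1, π.2.2, p₁.2.1, p₂.2.1]
end

section
/- (Principle (⊗), nested permissions.) For every assertion A and all permissions π₁, π₂ (so 0 < π₁·π₂ ≤ 1, and π₁·π₂ is again a permission), the assertion (A^{π₁})^{π₂} entails A^{π₁·π₂}. -/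
theorem ppow_ppow {Loc Val : Type}
    (A : PHeap Loc Val → Prop) (π₁ π₂ : Perm) :
    entails (ppow (ppow A π₁) π₂)
      (ppow A ⟨π₁.1 * π₂.1, mul_pos π₁.2.1 π₂.2.1,
        by nlinarith [π₁.2.1, π₁.2.2, π₂.2.1, π₂.2.2]⟩) := by
  rintro h ⟨h', ⟨h'', hA, rfl⟩, rfl⟩
  refine ⟨h'', hA, ?_⟩
  funext l
  simp only [psmul, Option.map_map]
  cases h'' l with
  | none => rfl
  | some vp =>
    simp only [Option.map_some, Function.comp]
    congr 1
    exact Prod.ext rfl (Subtype.ext (by ring))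
end

section
/- (Cross-split identity for strong and weak heap composition; the core of Lemma 1.) Let a, b, c, d be p-heaps such that a, b are compatible, c, d are compatible, and the weak compositions a ∘̄ b and c ∘̄ d have disjoint domains. Then: a and c are disjoint; b and d are disjoint; the strong compositions a ∘ c and b ∘ d are compatible with each other; and (a ∘̄ b) ∘ (c ∘̄ d) = (a ∘ c) ∘̄ (b ∘ d). -/
theorem cross_split_identity {Loc Val : Type}
    (a b c d : PHeap Loc Val)
    (hab : pcompatible a b) (hcd : pcompatible c d)
    (hdisj : pdisjoint (wComp a b) (wComp c d)) :
    pdisjoint a c ∧ pdisjoint b d ∧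
    pcompatible (sComp a c) (sComp b d) ∧
    sComp (wComp a b) (wComp c d) = wComp (sComp a c) (sComp b d) := by
  have sL : ∀ (h₁ h₂ : PHeap Loc Val) l, h₁ l = none → sComp h₁ h₂ l = h₂ l := by
    intro h₁ h₂ l hn; simp [sComp, hn]
  have sR : ∀ (h₁ h₂ : PHeap Loc Val) l, h₂ l = none → sComp h₁ h₂ l = h₁ l := by
    intro h₁ h₂ l hn; rcases e : h₁ l with _ | p <;> simp [sComp, e, hn]
  have wnone : ∀ (h₁ h₂ : PHeap Loc Val), pcompatible h₁ h₂ → ∀ l,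
      wComp h₁ h₂ l = none → h₁ l = none ∧ h₂ l = none := by
    intro h₁ h₂ hcomp l hn
    rcases e1 : h₁ l with _ | ⟨v₁, π₁⟩ <;> rcases e2 : h₂ l with _ | ⟨v₂, π₂⟩
    · exact ⟨rfl, rfl⟩
    · simp [wComp, e1, e2] at hn
    · simp [wComp, e1, e2] at hn
    · have := (hcomp l v₁ π₁ v₂ π₂ e1 e2).2
      simp [wComp, e1, e2, this] at hn
  have key : ∀ l, (a l = none ∧ b l = none) ∨ (c l = none ∧ d l = none) := by
    intro l
    have h := Set.eq_empty_iff_forall_notMem.mp hdisj l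
    simp only [Set.mem_inter_iff, pdom, Set.mem_setOf_eq, not_and, not_not] at h
    by_cases h1 : wComp a b l = none
    · exact Or.inl (wnone a b hab l h1)
    · exact Or.inr (wnone c d hcd l (h h1))
  refine ⟨?_, ?_, ?_, ?_⟩
  · apply Set.eq_empty_iff_forall_notMem.mpr
    intro l hl
    simp only [Set.mem_inter_iff, pdom, Set.mem_setOf_eq] at hl
    rcases key l with ⟨h1, _⟩ | ⟨h1, _⟩
    · exact hl.1 h1
    · exact hl.2 h1
  · apply Set.eq_empty_iff_forall_notMem.mpr
    intro l hl
    simp only [Set.mem_inter_iff, pdom, Set.mem_setOf_eq] at hl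
    rcases key l with ⟨_, h1⟩ | ⟨_, h1⟩
    · exact hl.1 h1
    · exact hl.2 h1
  · intro l v₁ π₁ v₂ π₂ e1 e2
    rcases key l with ⟨ha, hb⟩ | ⟨hc', hd'⟩
    · rw [sL a c l ha] at e1; rw [sL b d l hb] at e2
      exact hcd l v₁ π₁ v₂ π₂ e1 e2
    · rw [sR a c l hc'] at e1; rw [sR b d l hd'] at e2
      exact hab l v₁ π₁ v₂ π₂ e1 e2
  · funext l
    rcases key l with ⟨ha, hb⟩ | ⟨hc', hd'⟩
    · have hw : wComp a b l = none := by simp [wComp, ha, hb]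
      rw [show sComp (wComp a b) (wComp c d) l = wComp c d l from sL _ _ l hw]
      simp only [wComp]
      rw [sL a c l ha, sL b d l hb]
    · have hw : wComp c d l = none := by simp [wComp, hc', hd']
      rw [show sComp (wComp a b) (wComp c d) l = wComp a b l from sR _ _ l hw]
      simp only [wComp]
      rw [sR a c l hc', sR b d l hd']
end
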